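/- Let ℵ_α be an infinite regular cardinal, β ≤ ℵ_α an ordinal, and f : β → (ℵ_α + 1). If the cardinality of {γ < β : f(γ) = ℵ_α} is strictly less than ℵ_α, then there exists an ordinal η with η ≤ β and η < ℵ_α such that f(γ) < ℵ_α for all γ with η ≤ γ < β, and consequently Σ f ≤ ℵ_α·(η+1) < ℵ_α². -/

import Mathlib

/-!
The indices where `f` reaches `ℵ_α` form a set of size `< ℵ_α = cof ℵ_α`, so by regularity they
are bounded by some `η < ℵ_α`. Below `η` each summand is at most `ℵ_α`, so the partial sum up to
`η` is at most `ℵ_α · η`. Beyond `η` every summand is `< ℵ_α`; since `ℵ_α` is additively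
principal, adding such a summand keeps a partial sum below `Σ_{γ<η} f γ + ℵ_α`, and at limit
stages fewer than `cof ℵ_α` partial sums below that bound have their supremum below it too.
-/

noncomputable def transSum (f : Ordinal → Ordinal) (β : Ordinal) : Ordinal :=
  Ordinal.limitRecOn β 0 (fun γ ih => ih + f γ) (fun γ _ ih => Ordinal.bsup γ (fun δ h => ih δ h))

open Cardinal Ordinal Order Set

theorem Ordinal.IsPrincipal.add_lt_of_lt_add {o d x y : Ordinal} (ho : IsPrincipal (· + ·) o)
    (hx : x < d + o) (hy : y < o) : x + y < d + o := by
  obtain ⟨r, hr, hxr⟩ := (lt_add_iff (hy.trans_le' zero_le).ne').1 hx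
  calc x + y ≤ d + r + y := add_le_add_left hxr y
    _ = d + (r + y) := add_assoc d r y
    _ < d + o := (add_lt_add_iff_left d).2 (ho hr hy)

theorem Ordinal.exists_le_lt_subset_Iio_of_mk_lt_cof {s : Set Ordinal.{u}} {a b : Ordinal.{u}}
    (hs : #s < (lift.{u + 1} a).cof) (hb : b ≤ a) (hsb : s ⊆ Iio b) :
    ∃ η ≤ b, η < a ∧ s ⊆ Iio η := by
  have hub : b ∈ upperBounds ((· + 1) '' s) := by
    rintro _ ⟨γ, hγ, rfl⟩
    exact add_one_le_of_lt (hsb hγ)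
  refine ⟨sSup ((· + 1) '' s), csSup_le' hub,
    sSup_add_one_lt_of_lt_cof hs fun γ hγ => (hsb hγ).trans_le hb, fun γ hγ => ?_⟩
  exact (lt_add_one γ).trans_le (le_csSup ⟨b, hub⟩ ⟨γ, hγ, rfl⟩)

section transSum

variable {f : Ordinal.{u} → Ordinal.{u}}

theorem transSum_zero : transSum f 0 = 0 := by
  simp [transSum, limitRecOn_zero]

theorem transSum_add_one (γ : Ordinal.{u}) : transSum f (γ + 1) = transSum f γ + f γ := by
  simp [transSum, limitRecOn_add_one]

set_option linter.deprecated false in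
theorem transSum_of_isSuccLimit {β : Ordinal.{u}} (hβ : IsSuccLimit β) :
    transSum f β = ⨆ δ : Iio β, transSum f δ := by
  rw [transSum, limitRecOn_limit _ _ _ _ hβ, ← iSup_Iio_eq_bsup]
  rfl

theorem transSum_mono : Monotone (transSum f) := by
  intro γ β hγβ
  induction β using limitRecOn generalizing γ with
  | zero => rw [nonpos_iff_eq_zero.1 hγβ]
  | add_one β ih =>
    rcases hγβ.lt_or_eq with hlt | rfl
    · rw [transSum_add_one]
      exact (ih (lt_add_one_iff.1 hlt)).trans le_self_add
    · rfl
  | limit β hβ _ =>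
    rcases hγβ.lt_or_eq with hlt | rfl
    · rw [transSum_of_isSuccLimit hβ]
      exact Ordinal.le_iSup (fun δ : Iio β => transSum f δ) ⟨γ, hlt⟩
    · rfl

theorem transSum_le_mul {o β : Ordinal.{u}} (hf : ∀ γ < β, f γ ≤ o) : transSum f β ≤ o * β := by
  induction β using limitRecOn with
  | zero => simp [transSum_zero]
  | add_one γ ih =>
    rw [transSum_add_one, mul_add_one]
    exact add_le_add (ih fun δ hδ => hf δ (hδ.trans (lt_add_one γ))) (hf γ (lt_add_one γ))
  | limit β hβ ih =>
    rw [transSum_of_isSuccLimit hβ]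
    exact Ordinal.iSup_le fun δ =>
      (ih δ δ.2 fun γ hγ => hf γ (hγ.trans δ.2)).trans (mul_le_mul_right δ.2.le o)

theorem transSum_lt_add_of_tail {o η β : Ordinal.{u}} (ho : IsPrincipal (· + ·) o)
    (hβ : β.card < o.cof) (hf : ∀ γ, η ≤ γ → γ < β → f γ < o) :
    transSum f β < transSum f η + o := by
  have ho0 : 0 < o := pos_iff_ne_zero.2 fun h => by simp [h] at hβ
  have hη : transSum f η < transSum f η + o := lt_add_of_pos_right _ ho0
  induction β using limitRecOn with
  | zero => exact hη.trans_le' (transSum_zero.trans_le zero_le)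
  | add_one γ ih =>
    have hγ : γ.card < o.cof := (card_le_card le_self_add).trans_lt hβ
    by_cases hηγ : η ≤ γ
    · rw [transSum_add_one]
      exact ho.add_lt_of_lt_add (ih hγ fun δ h₁ h₂ => hf δ h₁ (h₂.trans (lt_add_one γ)))
        (hf γ hηγ (lt_add_one γ))
    · exact hη.trans_le' (transSum_mono (add_one_le_of_lt (not_le.1 hηγ)))
  | limit β hβlim ih =>
    rw [transSum_of_isSuccLimit hβlim]
    refine lift_iSup_lt_of_lt_cof ?_ fun δ =>
      ih δ δ.2 ((card_le_card δ.2.le).trans_lt hβ) fun γ h₁ h₂ => hf γ h₁ (h₂.trans δ.2)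
    rw [Cardinal.mk_Iio_ordinal, Cardinal.lift_lift, ← lift_cof, cof_add _ ho0.ne', Cardinal.lift_lt]
    exact hβ

theorem transSum_le_add_of_tail {c : Cardinal.{u}} (hc : c.IsRegular) {η β : Ordinal.{u}}
    (hβ : β ≤ c.ord) (hf : ∀ γ, η ≤ γ → γ < β → f γ < c.ord) :
    transSum f β ≤ transSum f η + c.ord := by
  have ho := isPrincipal_add_ord hc.aleph0_le
  have hcard {δ : Ordinal.{u}} (hδ : δ < c.ord) : δ.card < c.ord.cof := by
    rwa [hc.cof_ord, ← lt_ord]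
  rcases hβ.lt_or_eq with hlt | rfl
  · exact (transSum_lt_add_of_tail ho (hcard hlt) hf).le
  · rw [transSum_of_isSuccLimit (isSuccLimit_ord hc.aleph0_le)]
    exact Ordinal.iSup_le fun δ =>
      (transSum_lt_add_of_tail ho (hcard δ.2) fun γ h₁ h₂ => hf γ h₁ (h₂.trans δ.2)).le

end transSum

theorem transSum_lt_sq_of_small (α β : Ordinal.{0}) (hreg : (Cardinal.aleph α).IsRegular)
    (hβ : β ≤ (Cardinal.aleph α).ord) (f : Ordinal.{0} → Ordinal.{0})
    (hf : ∀ γ < β, f γ ≤ (Cardinal.aleph α).ord)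
    (hcard : Cardinal.mk {γ : Ordinal.{0} // γ < β ∧ f γ = (Cardinal.aleph α).ord} <
      Cardinal.lift.{1} (Cardinal.aleph α)) :
    ∃ η : Ordinal, η ≤ β ∧ η < (Cardinal.aleph α).ord ∧
      (∀ γ, η ≤ γ → γ < β → f γ < (Cardinal.aleph α).ord) ∧
      transSum f β ≤ (Cardinal.aleph α).ord * (η + 1) ∧
      (Cardinal.aleph α).ord * (η + 1) < (Cardinal.aleph α).ord * (Cardinal.aleph α).ord := by
  set o := (aleph α).ord
  have hlim : IsSuccLimit o := isSuccLimit_ord hreg.aleph0_le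
  obtain ⟨η, hηβ, hηo, hbad⟩ := exists_le_lt_subset_Iio_of_mk_lt_cof
    (s := {γ | γ < β ∧ f γ = o}) (by rwa [← lift_cof, hreg.cof_ord]) hβ fun γ hγ => hγ.1
  have htail : ∀ γ, η ≤ γ → γ < β → f γ < o := fun γ hηγ hγβ =>
    (hf γ hγβ).lt_of_ne fun h => (hbad ⟨hγβ, h⟩).not_ge hηγ
  refine ⟨η, hηβ, hηo, htail, ?_, mul_lt_mul_of_pos_left (hlim.add_one_lt hηo) hlim.bot_lt⟩
  calc transSum f β ≤ transSum f η + o := transSum_le_add_of_tail hreg hβ htail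
    _ ≤ o * η + o := add_le_add_left (transSum_le_mul fun γ hγ => hf γ (hγ.trans_le hηβ)) o
    _ = o * (η + 1) := (mul_add_one o η).symm
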